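/- Let N ≥ 1, M be integers, h a nonzero integer, s, s' ≥ 1 integers, and β ∈ ℂ generic (so that all sines occurring in denominators below are nonzero at ε = 0 and in a neighbourhood). Consider the function G(ε) = ∏_{j=0}^{s−1} ∏_{l=0}^{s'−1} 𝒴_{N, (Nh−ε)/2, M}( β + iπ( j − l − (s−s')/2 ) ) of a real (or complex) variable ε. Then G(0) = 1 and G′(0) = ∑_{j=0}^{s−1} ∑_{l=0}^{s'−1} f_h( β + iπ( j − l − (s−s')/2 ) ), where f_h(β) = M(M+1)·f_s(β) if h is even and f_h(β) = 2⌊M/2⌋(⌊M/2⌋+1)·f_s(β) + 2⌊(M+1)/2⌋²·f_c(β) if h is odd. -/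

import Mathlib

open Complex
open scoped Real

/-- The exchange function `F(M,β)` of Lemma 3.1 of the paper:
`F(M,β) = ∏_{k=0}^{M−1} sin²((iβ+kπr)/N) / (sin((iβ+kπr+π)/N)·sin((iβ+kπr−π)/N))` for `M > 0`,
`F(M,β) = ∏_{k=1}^{|M|} sin((−iβ+kπr+π)/N)·sin((−iβ+kπr−π)/N) / sin²((−iβ+kπr)/N)` for `M < 0`,
and `F(0,β) = 1`. -/
noncomputable def Ffun (N : ℕ) (r : ℂ) (M : ℤ) (β : ℂ) : ℂ :=
  if 0 < M then
    ∏ k ∈ Finset.range M.toNat,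
      (Complex.sin ((Complex.I * β + (k : ℂ) * (π : ℂ) * r) / (N : ℂ))) ^ 2 /
        (Complex.sin ((Complex.I * β + (k : ℂ) * (π : ℂ) * r + (π : ℂ)) / (N : ℂ)) *
         Complex.sin ((Complex.I * β + (k : ℂ) * (π : ℂ) * r - (π : ℂ)) / (N : ℂ)))
  else if M < 0 then
    ∏ k ∈ Finset.range M.natAbs,
      Complex.sin ((-(Complex.I * β) + ((k : ℂ) + 1) * (π : ℂ) * r + (π : ℂ)) / (N : ℂ)) *
        Complex.sin ((-(Complex.I * β) + ((k : ℂ) + 1) * (π : ℂ) * r - (π : ℂ)) / (N : ℂ)) /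
        (Complex.sin ((-(Complex.I * β) + ((k : ℂ) + 1) * (π : ℂ) * r) / (N : ℂ))) ^ 2
  else 1

/-- The structure function `𝒴_{N,r,M}(β)` of Theorem 3.4 of the paper:
`𝒴_{N,r,M}(β) = ∏_{k=1}^{m} sin²((iβ−kπr)/N)/sin²((iβ+kπr)/N) ·
sin((iβ+kπr+π)/N)/sin((iβ−kπr+π)/N) · sin((iβ+kπr−π)/N)/sin((iβ−kπr−π)/N)`,
with `m = M` for `M > 0` and `m = |M| − 1` for `M < 0`. -/
noncomputable def Yfun (N : ℕ) (r : ℂ) (M : ℤ) (β : ℂ) : ℂ :=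
  ∏ k ∈ Finset.range (if 0 < M then M.toNat else M.natAbs - 1),
    ((Complex.sin ((Complex.I * β - ((k : ℂ) + 1) * (π : ℂ) * r) / (N : ℂ))) ^ 2 /
      (Complex.sin ((Complex.I * β + ((k : ℂ) + 1) * (π : ℂ) * r) / (N : ℂ))) ^ 2) *
    (Complex.sin ((Complex.I * β + ((k : ℂ) + 1) * (π : ℂ) * r + (π : ℂ)) / (N : ℂ)) /
      Complex.sin ((Complex.I * β - ((k : ℂ) + 1) * (π : ℂ) * r + (π : ℂ)) / (N : ℂ))) *
    (Complex.sin ((Complex.I * β + ((k : ℂ) + 1) * (π : ℂ) * r - (π : ℂ)) / (N : ℂ)) /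
      Complex.sin ((Complex.I * β - ((k : ℂ) + 1) * (π : ℂ) * r - (π : ℂ)) / (N : ℂ)))

/-- Genericity of `β`: all sines of the form `sin((±iβ + aπr + bπ)/N)`, `a, b ∈ ℤ`,
occurring in the denominators of the functions `F` and `𝒴`, are nonzero. -/
def Gen (N : ℕ) (r : ℝ) (β : ℂ) : Prop :=
  ∀ a b : ℤ,
    Complex.sin ((Complex.I * β + (a : ℂ) * (π : ℂ) * (r : ℂ) + (b : ℂ) * (π : ℂ)) / (N : ℂ)) ≠ 0

/-- The Poisson structure function
`f_s(β) = −(π/N)·sin²(π/N)·cos(iβ/N) / (sin(iβ/N)·sin((iβ+π)/N)·sin((iβ−π)/N))`. -/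
noncomputable def fs (N : ℕ) (β : ℂ) : ℂ :=
  -((π : ℂ) / (N : ℂ)) * (Complex.sin ((π : ℂ) / (N : ℂ))) ^ 2 *
      Complex.cos (Complex.I * β / (N : ℂ)) /
    (Complex.sin (Complex.I * β / (N : ℂ)) *
      Complex.sin ((Complex.I * β + (π : ℂ)) / (N : ℂ)) *
      Complex.sin ((Complex.I * β - (π : ℂ)) / (N : ℂ)))

/-- The Poisson structure function
`f_c(β) = (π/N)·sin²(π/N)·sin(iβ/N) / (cos(iβ/N)·cos((iβ+π)/N)·cos((iβ−π)/N))`. -/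
noncomputable def fc (N : ℕ) (β : ℂ) : ℂ :=
  ((π : ℂ) / (N : ℂ)) * (Complex.sin ((π : ℂ) / (N : ℂ))) ^ 2 *
      Complex.sin (Complex.I * β / (N : ℂ)) /
    (Complex.cos (Complex.I * β / (N : ℂ)) *
      Complex.cos ((Complex.I * β + (π : ℂ)) / (N : ℂ)) *
      Complex.cos ((Complex.I * β - (π : ℂ)) / (N : ℂ)))

/-- The `h`-labelled Poisson structure function of Section 4.2 of the paper:
`f_h(β) = M(M+1)·f_s(β)` for `h` even, and
`f_h(β) = 2⌊M/2⌋(⌊M/2⌋+1)·f_s(β) + 2⌊(M+1)/2⌋²·f_c(β)` for `h` odd. -/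
noncomputable def fh (N : ℕ) (M h : ℤ) (β : ℂ) : ℂ :=
  if Even h then ((M * (M + 1) : ℤ) : ℂ) * fs N β
  else ((2 * M.fdiv 2 * (M.fdiv 2 + 1) : ℤ) : ℂ) * fs N β +
    ((2 * ((M + 1).fdiv 2) ^ 2 : ℤ) : ℂ) * fc N β

/-- Genericity of `β`: the sines and cosines occurring in the denominators of the
`𝒴`-functions at `ε = 0` (hence, by continuity, in a neighbourhood) are all nonzero. -/
def Gen2 (N : ℕ) (β : ℂ) : Prop :=
  Complex.sin (Complex.I * β / (N : ℂ)) ≠ 0 ∧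
  Complex.sin ((Complex.I * β + (π : ℂ)) / (N : ℂ)) ≠ 0 ∧
  Complex.sin ((Complex.I * β - (π : ℂ)) / (N : ℂ)) ≠ 0 ∧
  Complex.cos (Complex.I * β / (N : ℂ)) ≠ 0 ∧
  Complex.cos ((Complex.I * β + (π : ℂ)) / (N : ℂ)) ≠ 0 ∧
  Complex.cos ((Complex.I * β - (π : ℂ)) / (N : ℂ)) ≠ 0

private lemma sinshift (z : ℂ) (q : ℤ) : Complex.sin (z + q*π) = (-1)^q * Complex.sin z := by
  have := Complex.sin_antiperiodic.add_int_mul_eq (n := q) (x := z)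
  rw [this, show ((q.negOnePow : ℤ) : ℂ) = (-1:ℂ)^q from Int.cast_negOnePow ℂ q]

private lemma sinhalf (z : ℂ) : Complex.sin (z + π/2) = Complex.cos z := by
  simp [Complex.sin_add, ← Complex.ofReal_div, ← Complex.ofReal_sin, ← Complex.ofReal_cos]

private lemma sinhalf' (z : ℂ) : Complex.sin (z - π/2) = -Complex.cos z := by
  simp [Complex.sin_sub, ← Complex.ofReal_div, ← Complex.ofReal_sin, ← Complex.ofReal_cos]

private lemma negone_mul_self (q : ℤ) : ((-1:ℂ)^q) * ((-1:ℂ)^q) = 1 := by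
  rw [← zpow_add₀ (by norm_num : (-1:ℂ) ≠ 0), ← two_mul, zpow_mul]
  norm_num

private lemma negone_neg (q : ℤ) : ((-1:ℂ)^(-q)) = (-1:ℂ)^q := by
  rw [zpow_neg, ← inv_zpow, inv_neg, inv_one]

private lemma dsin (b c : ℂ) : HasDerivAt (fun ε : ℂ => Complex.sin (b + c*ε)) (c * Complex.cos b) 0 := by
  have h1 : HasDerivAt (fun ε : ℂ => b + c*ε) c 0 := by
    simpa using ((hasDerivAt_id (0:ℂ)).const_mul c).const_add b
  have := (Complex.hasDerivAt_sin (b + c*0)).comp 0 h1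
  simpa [Function.comp_def, mul_comm] using this

private lemma dsin' (b c : ℂ) : HasDerivAt (fun ε : ℂ => Complex.sin (b - c*ε)) (-(c * Complex.cos b)) 0 := by
  have := dsin b (-c)
  simpa [sub_eq_add_neg, neg_mul] using this

private lemma dcos (b c : ℂ) : HasDerivAt (fun ε : ℂ => Complex.cos (b + c*ε)) (-(c * Complex.sin b)) 0 := by
  have h1 : HasDerivAt (fun ε : ℂ => b + c*ε) c 0 := by
    simpa using ((hasDerivAt_id (0:ℂ)).const_mul c).const_add b
  have := (Complex.hasDerivAt_cos (b + c*0)).comp 0 h1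
  simpa [Function.comp_def, mul_comm] using this

private lemma dcos' (b c : ℂ) : HasDerivAt (fun ε : ℂ => Complex.cos (b - c*ε)) (c * Complex.sin b) 0 := by
  have := dcos b (-c)
  simpa [sub_eq_add_neg, neg_mul] using this

private lemma trig0 (A p : ℂ) :
    4*Complex.cos A*Complex.sin (A+p)*Complex.sin (A-p)
      - 2*Complex.cos (A+p)*Complex.sin A*Complex.sin (A-p)
      - 2*Complex.cos (A-p)*Complex.sin A*Complex.sin (A+p)
      = -(4*(Complex.sin p)^2*Complex.cos A) := by
  simp only [Complex.sin_add, Complex.cos_add, Complex.sin_sub, Complex.cos_sub]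
  linear_combination (-4*Complex.cos A*(Complex.sin p)^2) * (Complex.sin_sq_add_cos_sq A)

private lemma trig1 (A p : ℂ) :
    -(4*Complex.sin A*Complex.cos (A+p)*Complex.cos (A-p))
      + 2*Complex.sin (A+p)*Complex.cos A*Complex.cos (A-p)
      + 2*Complex.sin (A-p)*Complex.cos A*Complex.cos (A+p)
      = 4*(Complex.sin p)^2*Complex.sin A := by
  simp only [Complex.sin_add, Complex.cos_add, Complex.sin_sub, Complex.cos_sub]
  linear_combination (4*Complex.sin A*(Complex.sin p)^2) * (Complex.sin_sq_add_cos_sq A)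

private lemma fact0 (A B C a : ℂ) (q : ℤ) (hA : Complex.sin A ≠ 0)
    (hB : Complex.sin B ≠ 0) (hC : Complex.sin C ≠ 0) :
    ((Complex.sin (A - ((q:ℂ)*π - a*0)))^2 / (Complex.sin (A + ((q:ℂ)*π - a*0)))^2
      * (Complex.sin (B + ((q:ℂ)*π - a*0)) / Complex.sin (B - ((q:ℂ)*π - a*0)))
      * (Complex.sin (C + ((q:ℂ)*π - a*0)) / Complex.sin (C - ((q:ℂ)*π - a*0))) = 1) ∧
    HasDerivAt (fun ε : ℂ =>
      (Complex.sin (A - ((q:ℂ)*π - a*ε)))^2 / (Complex.sin (A + ((q:ℂ)*π - a*ε)))^2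
      * (Complex.sin (B + ((q:ℂ)*π - a*ε)) / Complex.sin (B - ((q:ℂ)*π - a*ε)))
      * (Complex.sin (C + ((q:ℂ)*π - a*ε)) / Complex.sin (C - ((q:ℂ)*π - a*ε))))
      (a * (4*Complex.cos A/Complex.sin A - 2*Complex.cos B/Complex.sin B
            - 2*Complex.cos C/Complex.sin C)) 0 := by
  set u : ℂ := (-1:ℂ)^q with hu_def
  have hu : u * u = 1 := negone_mul_self q
  have hu0 : u ≠ 0 := by
    intro h0; rw [h0] at hu; simp at hu
  have hu2 : u^2 = 1 := by rw [sq]; exact hu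
  have key : ∀ z w : ℂ, Complex.sin (z + ((q:ℂ)*π - w)) = u * Complex.sin (z - w) := by
    intro z w
    rw [show z + ((q:ℂ)*π - w) = (z - w) + (q:ℂ)*π by ring, sinshift]
  have key2 : ∀ z w : ℂ, Complex.sin (z - ((q:ℂ)*π - w)) = u * Complex.sin (z + w) := by
    intro z w
    rw [show z - ((q:ℂ)*π - w) = (z + w) + ((-q:ℤ):ℂ)*π by push_cast; ring, sinshift,
      negone_neg]
  have hfun : (fun ε : ℂ =>
      (Complex.sin (A - ((q:ℂ)*π - a*ε)))^2 / (Complex.sin (A + ((q:ℂ)*π - a*ε)))^2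
      * (Complex.sin (B + ((q:ℂ)*π - a*ε)) / Complex.sin (B - ((q:ℂ)*π - a*ε)))
      * (Complex.sin (C + ((q:ℂ)*π - a*ε)) / Complex.sin (C - ((q:ℂ)*π - a*ε))))
      = (fun ε : ℂ =>
      (Complex.sin (A + a*ε))^2 / (Complex.sin (A - a*ε))^2
      * (Complex.sin (B - a*ε) / Complex.sin (B + a*ε))
      * (Complex.sin (C - a*ε) / Complex.sin (C + a*ε))) := by
    funext ε
    simp only [key, key2, mul_pow, hu2, one_mul, mul_div_mul_left _ _ hu0]
  have hA0 : Complex.sin (A - a*0) ≠ 0 := by simpa using hA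
  have hA0' : Complex.sin (A + a*0) ≠ 0 := by simpa using hA
  have hB0 : Complex.sin (B + a*0) ≠ 0 := by simpa using hB
  have hC0 : Complex.sin (C + a*0) ≠ 0 := by simpa using hC
  constructor
  · have := congrFun hfun 0
    rw [this]
    simp only [mul_zero, add_zero, sub_zero]
    rw [div_self (pow_ne_zero 2 hA), div_self hB, div_self hC]
    norm_num
  · rw [hfun]
    have d1 := (dsin A a).fun_pow 2
    have d2 := (dsin' A a).fun_pow 2
    have q1 := d1.fun_div d2 (by simpa using pow_ne_zero 2 hA)
    have q2 := (dsin' B a).fun_div (dsin B a) (by simpa using hB)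
    have q3 := (dsin' C a).fun_div (dsin C a) (by simpa using hC)
    have total := (q1.fun_mul q2).fun_mul q3
    refine total.congr_deriv ?_
    simp only [mul_zero, add_zero, sub_zero]
    field_simp
    ring

private lemma fact1 (A B C a : ℂ) (q : ℤ) (hA : Complex.cos A ≠ 0)
    (hB : Complex.cos B ≠ 0) (hC : Complex.cos C ≠ 0) :
    ((Complex.sin (A - ((q:ℂ)*π + π/2 - a*0)))^2 / (Complex.sin (A + ((q:ℂ)*π + π/2 - a*0)))^2
      * (Complex.sin (B + ((q:ℂ)*π + π/2 - a*0)) / Complex.sin (B - ((q:ℂ)*π + π/2 - a*0)))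
      * (Complex.sin (C + ((q:ℂ)*π + π/2 - a*0)) / Complex.sin (C - ((q:ℂ)*π + π/2 - a*0))) = 1) ∧
    HasDerivAt (fun ε : ℂ =>
      (Complex.sin (A - ((q:ℂ)*π + π/2 - a*ε)))^2 / (Complex.sin (A + ((q:ℂ)*π + π/2 - a*ε)))^2
      * (Complex.sin (B + ((q:ℂ)*π + π/2 - a*ε)) / Complex.sin (B - ((q:ℂ)*π + π/2 - a*ε)))
      * (Complex.sin (C + ((q:ℂ)*π + π/2 - a*ε)) / Complex.sin (C - ((q:ℂ)*π + π/2 - a*ε))))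
      (a * (-(4*Complex.sin A/Complex.cos A) + 2*Complex.sin B/Complex.cos B
            + 2*Complex.sin C/Complex.cos C)) 0 := by
  set u : ℂ := (-1:ℂ)^q with hu_def
  have hu : u * u = 1 := negone_mul_self q
  have hu0 : u ≠ 0 := by
    intro h0; rw [h0] at hu; simp at hu
  have hu2 : u^2 = 1 := by rw [sq]; exact hu
  have key : ∀ z w : ℂ, Complex.sin (z + ((q:ℂ)*π + π/2 - w)) = u * Complex.cos (z - w) := by
    intro z w
    rw [show z + ((q:ℂ)*π + π/2 - w) = ((z - w) + π/2) + (q:ℂ)*π by ring, sinshift, sinhalf]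
  have key2 : ∀ z w : ℂ, Complex.sin (z - ((q:ℂ)*π + π/2 - w)) = u * -Complex.cos (z + w) := by
    intro z w
    rw [show z - ((q:ℂ)*π + π/2 - w) = ((z + w) - π/2) + ((-q:ℤ):ℂ)*π by push_cast; ring,
      sinshift, negone_neg, sinhalf']
  have hfun : (fun ε : ℂ =>
      (Complex.sin (A - ((q:ℂ)*π + π/2 - a*ε)))^2 / (Complex.sin (A + ((q:ℂ)*π + π/2 - a*ε)))^2
      * (Complex.sin (B + ((q:ℂ)*π + π/2 - a*ε)) / Complex.sin (B - ((q:ℂ)*π + π/2 - a*ε)))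
      * (Complex.sin (C + ((q:ℂ)*π + π/2 - a*ε)) / Complex.sin (C - ((q:ℂ)*π + π/2 - a*ε))))
      = (fun ε : ℂ =>
      (Complex.cos (A + a*ε))^2 / (Complex.cos (A - a*ε))^2
      * (Complex.cos (B - a*ε) / -Complex.cos (B + a*ε))
      * (Complex.cos (C - a*ε) / -Complex.cos (C + a*ε))) := by
    funext ε
    simp only [key, key2, mul_pow, neg_sq, hu2, one_mul, mul_div_mul_left _ _ hu0]
  have hA0 : Complex.cos (A - a*0) ≠ 0 := by simpa using hA
  have hB0 : Complex.cos (B + a*0) ≠ 0 := by simpa using hB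
  have hC0 : Complex.cos (C + a*0) ≠ 0 := by simpa using hC
  constructor
  · have := congrFun hfun 0
    rw [this]
    simp only [mul_zero, add_zero, sub_zero]
    rw [div_self (pow_ne_zero 2 hA)]
    field_simp
  · rw [hfun]
    have d1 := (dcos A a).fun_pow 2
    have d2 := (dcos' A a).fun_pow 2
    have q1 := d1.fun_div d2 (by simpa using pow_ne_zero 2 hA)
    have q2 := (dcos' B a).fun_div ((dcos B a).fun_neg) (by simpa using neg_ne_zero.mpr hB)
    have q3 := (dcos' C a).fun_div ((dcos C a).fun_neg) (by simpa using neg_ne_zero.mpr hC)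
    have total := (q1.fun_mul q2).fun_mul q3
    refine total.congr_deriv ?_
    simp only [mul_zero, add_zero, sub_zero]
    field_simp
    ring

private lemma div_combo (x1 y1 x2 y2 x3 y3 T : ℂ) (h1 : y1 ≠ 0) (h2 : y2 ≠ 0) (h3 : y3 ≠ 0)
    (key : 4*x1*y2*y3 - 2*x2*y1*y3 - 2*x3*y1*y2 = T) :
    4*x1/y1 - 2*x2/y2 - 2*x3/y3 = T/(y1*y2*y3) := by
  field_simp
  linear_combination key

private lemma div_combo' (x1 y1 x2 y2 x3 y3 T : ℂ) (h1 : y1 ≠ 0) (h2 : y2 ≠ 0) (h3 : y3 ≠ 0)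
    (key : -(4*x1*y2*y3) + 2*x2*y1*y3 + 2*x3*y1*y2 = T) :
    -(4*x1/y1) + 2*x2/y2 + 2*x3/y3 = T/(y1*y2*y3) := by
  field_simp
  linear_combination key

private lemma fs_eq (N : ℕ) (hN : (N:ℂ) ≠ 0) (β : ℂ)
    (h1 : Complex.sin (Complex.I*β/(N:ℂ)) ≠ 0)
    (h2 : Complex.sin ((Complex.I*β+(π:ℂ))/(N:ℂ)) ≠ 0)
    (h3 : Complex.sin ((Complex.I*β-(π:ℂ))/(N:ℂ)) ≠ 0) :
    4*Complex.cos (Complex.I*β/(N:ℂ))/Complex.sin (Complex.I*β/(N:ℂ))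
      - 2*Complex.cos ((Complex.I*β+(π:ℂ))/(N:ℂ))/Complex.sin ((Complex.I*β+(π:ℂ))/(N:ℂ))
      - 2*Complex.cos ((Complex.I*β-(π:ℂ))/(N:ℂ))/Complex.sin ((Complex.I*β-(π:ℂ))/(N:ℂ))
      = 4*(N:ℂ)/(π:ℂ) * fs N β := by
  have hπ : (π:ℂ) ≠ 0 := Complex.ofReal_ne_zero.mpr Real.pi_ne_zero
  have e2 : (Complex.I*β+(π:ℂ))/(N:ℂ) = Complex.I*β/(N:ℂ) + (π:ℂ)/(N:ℂ) := add_div _ _ _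
  have e3 : (Complex.I*β-(π:ℂ))/(N:ℂ) = Complex.I*β/(N:ℂ) - (π:ℂ)/(N:ℂ) := sub_div _ _ _
  rw [e2] at h2; rw [e3] at h3
  rw [fs, e2, e3]
  rw [div_combo _ _ _ _ _ _ _ h1 h2 h3 (trig0 (Complex.I*β/(N:ℂ)) ((π:ℂ)/(N:ℂ))), ← mul_div_assoc]
  congr 1
  field_simp

private lemma fc_eq (N : ℕ) (hN : (N:ℂ) ≠ 0) (β : ℂ)
    (h1 : Complex.cos (Complex.I*β/(N:ℂ)) ≠ 0)
    (h2 : Complex.cos ((Complex.I*β+(π:ℂ))/(N:ℂ)) ≠ 0)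
    (h3 : Complex.cos ((Complex.I*β-(π:ℂ))/(N:ℂ)) ≠ 0) :
    -(4*Complex.sin (Complex.I*β/(N:ℂ))/Complex.cos (Complex.I*β/(N:ℂ)))
      + 2*Complex.sin ((Complex.I*β+(π:ℂ))/(N:ℂ))/Complex.cos ((Complex.I*β+(π:ℂ))/(N:ℂ))
      + 2*Complex.sin ((Complex.I*β-(π:ℂ))/(N:ℂ))/Complex.cos ((Complex.I*β-(π:ℂ))/(N:ℂ))
      = 4*(N:ℂ)/(π:ℂ) * fc N β := by
  have hπ : (π:ℂ) ≠ 0 := Complex.ofReal_ne_zero.mpr Real.pi_ne_zero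
  have e2 : (Complex.I*β+(π:ℂ))/(N:ℂ) = Complex.I*β/(N:ℂ) + (π:ℂ)/(N:ℂ) := add_div _ _ _
  have e3 : (Complex.I*β-(π:ℂ))/(N:ℂ) = Complex.I*β/(N:ℂ) - (π:ℂ)/(N:ℂ) := sub_div _ _ _
  rw [e2] at h2; rw [e3] at h3
  rw [fc, e2, e3]
  rw [div_combo' _ _ _ _ _ _ _ h1 h2 h3 (trig1 (Complex.I*β/(N:ℂ)) ((π:ℂ)/(N:ℂ))), ← mul_div_assoc]
  congr 1
  field_simp

private lemma prod_one_hasDeriv {ι : Type*} [DecidableEq ι] (u : Finset ι) (f : ι → ℂ → ℂ)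
    (g : ι → ℂ) (hv : ∀ i ∈ u, f i 0 = 1) (hd : ∀ i ∈ u, HasDerivAt (f i) (g i) 0) :
    HasDerivAt (fun ε => ∏ i ∈ u, f i ε) (∑ i ∈ u, g i) 0 := by
  have := HasDerivAt.fun_finsetProd (u := u) (f := f) (f' := g) hd
  refine this.congr_deriv ?_
  apply Finset.sum_congr rfl
  intro i hi
  rw [Finset.prod_eq_one (fun j hj => hv j (Finset.mem_of_mem_erase hj))]
  simp

private lemma sumA (m : ℕ) (x : ℂ) :
    ∑ k ∈ Finset.range m, (2*((k:ℂ)+1)) * x = ((m*(m+1) : ℕ) : ℂ) * x := by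
  induction m with
  | zero => simp
  | succ m ih =>
    rw [Finset.sum_range_succ, ih]
    push_cast
    ring

private lemma sumB (m : ℕ) (x y : ℂ) :
    ∑ k ∈ Finset.range m, (2*((k:ℂ)+1)) * (if Even (k+1) then x else y)
      = ((2*(m/2)*(m/2+1) : ℕ) : ℂ) * x + ((2*((m+1)/2)^2 : ℕ) : ℂ) * y := by
  induction m with
  | zero => simp
  | succ m ih =>
    rw [Finset.sum_range_succ, ih]
    rcases Nat.even_or_odd m with hm | hm
    · obtain ⟨t, rfl⟩ := hm
      have c1 : (t+t)/2 = t := by omega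
      have c2 : (t+t+1)/2 = t := by omega
      have c3 : (t+t+1+1)/2 = t+1 := by omega
      have c4 : ¬ Even (t+t+1) := by simp [Nat.even_add_one, Nat.even_add]
      rw [if_neg c4, c1, c2, c3]
      push_cast
      ring
    · obtain ⟨t, rfl⟩ := hm
      have c1 : (2*t+1)/2 = t := by omega
      have c2 : (2*t+1+1)/2 = t+1 := by omega
      have c3 : (2*t+1+1+1)/2 = t+1 := by omega
      have c4 : Even (2*t+1+1) := ⟨t+1, by ring⟩
      rw [if_pos c4, c1, c2, c3]
      push_cast
      ring

private noncomputable def factor (N : ℕ) (h : ℤ) (β : ℂ) (k : ℕ) (ε : ℂ) : ℂ :=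
  ((Complex.sin ((Complex.I * β - ((k : ℂ) + 1) * (π : ℂ) * (((N:ℂ)*(h:ℂ) - ε)/2)) / (N : ℂ))) ^ 2 /
      (Complex.sin ((Complex.I * β + ((k : ℂ) + 1) * (π : ℂ) * (((N:ℂ)*(h:ℂ) - ε)/2)) / (N : ℂ))) ^ 2) *
    (Complex.sin ((Complex.I * β + ((k : ℂ) + 1) * (π : ℂ) * (((N:ℂ)*(h:ℂ) - ε)/2) + (π : ℂ)) / (N : ℂ)) /
      Complex.sin ((Complex.I * β - ((k : ℂ) + 1) * (π : ℂ) * (((N:ℂ)*(h:ℂ) - ε)/2) + (π : ℂ)) / (N : ℂ))) *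
    (Complex.sin ((Complex.I * β + ((k : ℂ) + 1) * (π : ℂ) * (((N:ℂ)*(h:ℂ) - ε)/2) - (π : ℂ)) / (N : ℂ)) /
      Complex.sin ((Complex.I * β - ((k : ℂ) + 1) * (π : ℂ) * (((N:ℂ)*(h:ℂ) - ε)/2) - (π : ℂ)) / (N : ℂ)))

private lemma factor_key (N : ℕ) (hN : 1 ≤ N) (h : ℤ) (β : ℂ) (hβ : Gen2 N β) (k : ℕ) :
    factor N h β k 0 = 1 ∧
    HasDerivAt (factor N h β k)
      ((2*((k:ℂ)+1)) * (if Even (((k:ℤ)+1)*h) then fs N β else fc N β)) 0 := by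
  obtain ⟨g1, g2, g3, g4, g5, g6⟩ := hβ
  have hNC : (N:ℂ) ≠ 0 := Nat.cast_ne_zero.mpr (by omega)
  have hπ : (π:ℂ) ≠ 0 := Complex.ofReal_ne_zero.mpr Real.pi_ne_zero
  rcases Int.even_or_odd (((k:ℤ)+1)*h) with ⟨q, hq⟩ | ⟨q, hq⟩
  · -- even case
    have hcast : ((k:ℂ)+1)*(h:ℂ) = 2*(q:ℂ) := by
      have := congrArg (fun z : ℤ => (z:ℂ)) hq
      push_cast at this
      linear_combination this
    have hT : ∀ ε : ℂ, ((k:ℂ)+1)*(π:ℂ)*(((N:ℂ)*(h:ℂ)-ε)/2)/(N:ℂ)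
        = (q:ℂ)*(π:ℂ) - (((k:ℂ)+1)*(π:ℂ)/(2*(N:ℂ)))*ε := by
      intro ε
      field_simp
      linear_combination (N:ℂ) * hcast
    have harg1 : ∀ ε : ℂ, (Complex.I * β - ((k:ℂ)+1)*(π:ℂ)*(((N:ℂ)*(h:ℂ)-ε)/2))/(N:ℂ)
        = Complex.I*β/(N:ℂ) - ((q:ℂ)*(π:ℂ) - (((k:ℂ)+1)*(π:ℂ)/(2*(N:ℂ)))*ε) := by
      intro ε; rw [sub_div, hT ε]
    have harg2 : ∀ ε : ℂ, (Complex.I * β + ((k:ℂ)+1)*(π:ℂ)*(((N:ℂ)*(h:ℂ)-ε)/2))/(N:ℂ)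
        = Complex.I*β/(N:ℂ) + ((q:ℂ)*(π:ℂ) - (((k:ℂ)+1)*(π:ℂ)/(2*(N:ℂ)))*ε) := by
      intro ε; rw [add_div, hT ε]
    have harg3 : ∀ ε : ℂ, (Complex.I * β + ((k:ℂ)+1)*(π:ℂ)*(((N:ℂ)*(h:ℂ)-ε)/2) + (π:ℂ))/(N:ℂ)
        = (Complex.I*β+(π:ℂ))/(N:ℂ) + ((q:ℂ)*(π:ℂ) - (((k:ℂ)+1)*(π:ℂ)/(2*(N:ℂ)))*ε) := by
      intro ε
      rw [show Complex.I * β + ((k:ℂ)+1)*(π:ℂ)*(((N:ℂ)*(h:ℂ)-ε)/2) + (π:ℂ)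
          = (Complex.I*β+(π:ℂ)) + ((k:ℂ)+1)*(π:ℂ)*(((N:ℂ)*(h:ℂ)-ε)/2) by ring,
        add_div, hT ε]
    have harg4 : ∀ ε : ℂ, (Complex.I * β - ((k:ℂ)+1)*(π:ℂ)*(((N:ℂ)*(h:ℂ)-ε)/2) + (π:ℂ))/(N:ℂ)
        = (Complex.I*β+(π:ℂ))/(N:ℂ) - ((q:ℂ)*(π:ℂ) - (((k:ℂ)+1)*(π:ℂ)/(2*(N:ℂ)))*ε) := by
      intro ε
      rw [show Complex.I * β - ((k:ℂ)+1)*(π:ℂ)*(((N:ℂ)*(h:ℂ)-ε)/2) + (π:ℂ)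
          = (Complex.I*β+(π:ℂ)) - ((k:ℂ)+1)*(π:ℂ)*(((N:ℂ)*(h:ℂ)-ε)/2) by ring,
        sub_div, hT ε]
    have harg5 : ∀ ε : ℂ, (Complex.I * β + ((k:ℂ)+1)*(π:ℂ)*(((N:ℂ)*(h:ℂ)-ε)/2) - (π:ℂ))/(N:ℂ)
        = (Complex.I*β-(π:ℂ))/(N:ℂ) + ((q:ℂ)*(π:ℂ) - (((k:ℂ)+1)*(π:ℂ)/(2*(N:ℂ)))*ε) := by
      intro ε
      rw [show Complex.I * β + ((k:ℂ)+1)*(π:ℂ)*(((N:ℂ)*(h:ℂ)-ε)/2) - (π:ℂ)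
          = (Complex.I*β-(π:ℂ)) + ((k:ℂ)+1)*(π:ℂ)*(((N:ℂ)*(h:ℂ)-ε)/2) by ring,
        add_div, hT ε]
    have harg6 : ∀ ε : ℂ, (Complex.I * β - ((k:ℂ)+1)*(π:ℂ)*(((N:ℂ)*(h:ℂ)-ε)/2) - (π:ℂ))/(N:ℂ)
        = (Complex.I*β-(π:ℂ))/(N:ℂ) - ((q:ℂ)*(π:ℂ) - (((k:ℂ)+1)*(π:ℂ)/(2*(N:ℂ)))*ε) := by
      intro ε
      rw [show Complex.I * β - ((k:ℂ)+1)*(π:ℂ)*(((N:ℂ)*(h:ℂ)-ε)/2) - (π:ℂ)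
          = (Complex.I*β-(π:ℂ)) - ((k:ℂ)+1)*(π:ℂ)*(((N:ℂ)*(h:ℂ)-ε)/2) by ring,
        sub_div, hT ε]
    have ff := fact0 (Complex.I*β/(N:ℂ)) ((Complex.I*β+(π:ℂ))/(N:ℂ))
      ((Complex.I*β-(π:ℂ))/(N:ℂ)) (((k:ℂ)+1)*(π:ℂ)/(2*(N:ℂ))) q g1 g2 g3
    have hfeq : factor N h β k = (fun ε : ℂ =>
        (Complex.sin (Complex.I*β/(N:ℂ) - ((q:ℂ)*(π:ℂ) - (((k:ℂ)+1)*(π:ℂ)/(2*(N:ℂ)))*ε)))^2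
          / (Complex.sin (Complex.I*β/(N:ℂ) + ((q:ℂ)*(π:ℂ) - (((k:ℂ)+1)*(π:ℂ)/(2*(N:ℂ)))*ε)))^2
        * (Complex.sin ((Complex.I*β+(π:ℂ))/(N:ℂ) + ((q:ℂ)*(π:ℂ) - (((k:ℂ)+1)*(π:ℂ)/(2*(N:ℂ)))*ε))
          / Complex.sin ((Complex.I*β+(π:ℂ))/(N:ℂ) - ((q:ℂ)*(π:ℂ) - (((k:ℂ)+1)*(π:ℂ)/(2*(N:ℂ)))*ε)))
        * (Complex.sin ((Complex.I*β-(π:ℂ))/(N:ℂ) + ((q:ℂ)*(π:ℂ) - (((k:ℂ)+1)*(π:ℂ)/(2*(N:ℂ)))*ε))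
          / Complex.sin ((Complex.I*β-(π:ℂ))/(N:ℂ) - ((q:ℂ)*(π:ℂ) - (((k:ℂ)+1)*(π:ℂ)/(2*(N:ℂ)))*ε)))) := by
      funext ε
      simp only [factor]
      rw [harg1 ε, harg2 ε, harg3 ε, harg4 ε, harg5 ε, harg6 ε]
    have hev : Even (((k:ℤ)+1)*h) := ⟨q, hq⟩
    rw [if_pos hev]
    constructor
    · rw [show factor N h β k 0 = _ from congrFun hfeq 0]
      exact ff.1
    · rw [hfeq]
      convert ff.2 using 1
      rw [fs_eq N hNC β g1 g2 g3]
      field_simp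
      ring
  · -- odd case
    have hcast : ((k:ℂ)+1)*(h:ℂ) = 2*(q:ℂ)+1 := by
      have := congrArg (fun z : ℤ => (z:ℂ)) hq
      push_cast at this
      linear_combination this
    have hT : ∀ ε : ℂ, ((k:ℂ)+1)*(π:ℂ)*(((N:ℂ)*(h:ℂ)-ε)/2)/(N:ℂ)
        = (q:ℂ)*(π:ℂ) + (π:ℂ)/2 - (((k:ℂ)+1)*(π:ℂ)/(2*(N:ℂ)))*ε := by
      intro ε
      field_simp
      linear_combination (N:ℂ) * hcast
    have harg1 : ∀ ε : ℂ, (Complex.I * β - ((k:ℂ)+1)*(π:ℂ)*(((N:ℂ)*(h:ℂ)-ε)/2))/(N:ℂ)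
        = Complex.I*β/(N:ℂ) - ((q:ℂ)*(π:ℂ) + (π:ℂ)/2 - (((k:ℂ)+1)*(π:ℂ)/(2*(N:ℂ)))*ε) := by
      intro ε; rw [sub_div, hT ε]
    have harg2 : ∀ ε : ℂ, (Complex.I * β + ((k:ℂ)+1)*(π:ℂ)*(((N:ℂ)*(h:ℂ)-ε)/2))/(N:ℂ)
        = Complex.I*β/(N:ℂ) + ((q:ℂ)*(π:ℂ) + (π:ℂ)/2 - (((k:ℂ)+1)*(π:ℂ)/(2*(N:ℂ)))*ε) := by
      intro ε; rw [add_div, hT ε]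
    have harg3 : ∀ ε : ℂ, (Complex.I * β + ((k:ℂ)+1)*(π:ℂ)*(((N:ℂ)*(h:ℂ)-ε)/2) + (π:ℂ))/(N:ℂ)
        = (Complex.I*β+(π:ℂ))/(N:ℂ) + ((q:ℂ)*(π:ℂ) + (π:ℂ)/2 - (((k:ℂ)+1)*(π:ℂ)/(2*(N:ℂ)))*ε) := by
      intro ε
      rw [show Complex.I * β + ((k:ℂ)+1)*(π:ℂ)*(((N:ℂ)*(h:ℂ)-ε)/2) + (π:ℂ)
          = (Complex.I*β+(π:ℂ)) + ((k:ℂ)+1)*(π:ℂ)*(((N:ℂ)*(h:ℂ)-ε)/2) by ring,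
        add_div, hT ε]
    have harg4 : ∀ ε : ℂ, (Complex.I * β - ((k:ℂ)+1)*(π:ℂ)*(((N:ℂ)*(h:ℂ)-ε)/2) + (π:ℂ))/(N:ℂ)
        = (Complex.I*β+(π:ℂ))/(N:ℂ) - ((q:ℂ)*(π:ℂ) + (π:ℂ)/2 - (((k:ℂ)+1)*(π:ℂ)/(2*(N:ℂ)))*ε) := by
      intro ε
      rw [show Complex.I * β - ((k:ℂ)+1)*(π:ℂ)*(((N:ℂ)*(h:ℂ)-ε)/2) + (π:ℂ)
          = (Complex.I*β+(π:ℂ)) - ((k:ℂ)+1)*(π:ℂ)*(((N:ℂ)*(h:ℂ)-ε)/2) by ring,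
        sub_div, hT ε]
    have harg5 : ∀ ε : ℂ, (Complex.I * β + ((k:ℂ)+1)*(π:ℂ)*(((N:ℂ)*(h:ℂ)-ε)/2) - (π:ℂ))/(N:ℂ)
        = (Complex.I*β-(π:ℂ))/(N:ℂ) + ((q:ℂ)*(π:ℂ) + (π:ℂ)/2 - (((k:ℂ)+1)*(π:ℂ)/(2*(N:ℂ)))*ε) := by
      intro ε
      rw [show Complex.I * β + ((k:ℂ)+1)*(π:ℂ)*(((N:ℂ)*(h:ℂ)-ε)/2) - (π:ℂ)
          = (Complex.I*β-(π:ℂ)) + ((k:ℂ)+1)*(π:ℂ)*(((N:ℂ)*(h:ℂ)-ε)/2) by ring,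
        add_div, hT ε]
    have harg6 : ∀ ε : ℂ, (Complex.I * β - ((k:ℂ)+1)*(π:ℂ)*(((N:ℂ)*(h:ℂ)-ε)/2) - (π:ℂ))/(N:ℂ)
        = (Complex.I*β-(π:ℂ))/(N:ℂ) - ((q:ℂ)*(π:ℂ) + (π:ℂ)/2 - (((k:ℂ)+1)*(π:ℂ)/(2*(N:ℂ)))*ε) := by
      intro ε
      rw [show Complex.I * β - ((k:ℂ)+1)*(π:ℂ)*(((N:ℂ)*(h:ℂ)-ε)/2) - (π:ℂ)
          = (Complex.I*β-(π:ℂ)) - ((k:ℂ)+1)*(π:ℂ)*(((N:ℂ)*(h:ℂ)-ε)/2) by ring,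
        sub_div, hT ε]
    have ff := fact1 (Complex.I*β/(N:ℂ)) ((Complex.I*β+(π:ℂ))/(N:ℂ))
      ((Complex.I*β-(π:ℂ))/(N:ℂ)) (((k:ℂ)+1)*(π:ℂ)/(2*(N:ℂ))) q g4 g5 g6
    have hfeq : factor N h β k = (fun ε : ℂ =>
        (Complex.sin (Complex.I*β/(N:ℂ) - ((q:ℂ)*(π:ℂ) + (π:ℂ)/2 - (((k:ℂ)+1)*(π:ℂ)/(2*(N:ℂ)))*ε)))^2
          / (Complex.sin (Complex.I*β/(N:ℂ) + ((q:ℂ)*(π:ℂ) + (π:ℂ)/2 - (((k:ℂ)+1)*(π:ℂ)/(2*(N:ℂ)))*ε)))^2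
        * (Complex.sin ((Complex.I*β+(π:ℂ))/(N:ℂ) + ((q:ℂ)*(π:ℂ) + (π:ℂ)/2 - (((k:ℂ)+1)*(π:ℂ)/(2*(N:ℂ)))*ε))
          / Complex.sin ((Complex.I*β+(π:ℂ))/(N:ℂ) - ((q:ℂ)*(π:ℂ) + (π:ℂ)/2 - (((k:ℂ)+1)*(π:ℂ)/(2*(N:ℂ)))*ε)))
        * (Complex.sin ((Complex.I*β-(π:ℂ))/(N:ℂ) + ((q:ℂ)*(π:ℂ) + (π:ℂ)/2 - (((k:ℂ)+1)*(π:ℂ)/(2*(N:ℂ)))*ε))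
          / Complex.sin ((Complex.I*β-(π:ℂ))/(N:ℂ) - ((q:ℂ)*(π:ℂ) + (π:ℂ)/2 - (((k:ℂ)+1)*(π:ℂ)/(2*(N:ℂ)))*ε)))) := by
      funext ε
      simp only [factor]
      rw [harg1 ε, harg2 ε, harg3 ε, harg4 ε, harg5 ε, harg6 ε]
    have hodd : ¬ Even (((k:ℤ)+1)*h) := by
      rw [Int.even_iff, hq]
      omega
    rw [if_neg hodd]
    constructor
    · rw [show factor N h β k 0 = _ from congrFun hfeq 0]
      exact ff.1
    · rw [hfeq]
      convert ff.2 using 1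
      rw [fc_eq N hNC β g4 g5 g6]
      field_simp
      ring

private lemma sum_d (N : ℕ) (M h : ℤ) (β : ℂ) :
    ∑ k ∈ Finset.range (if 0 < M then M.toNat else M.natAbs - 1),
      (2*((k:ℂ)+1)) * (if Even (((k:ℤ)+1)*h) then fs N β else fc N β) = fh N M h β := by
  set m := (if 0 < M then M.toNat else M.natAbs - 1) with hm
  rcases Int.even_or_odd h with he | ho
  · have hcg : ∀ k ∈ Finset.range m,
        (2*((k:ℂ)+1)) * (if Even (((k:ℤ)+1)*h) then fs N β else fc N β)
          = (2*((k:ℂ)+1)) * fs N β := by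
      intro k _
      rw [if_pos (he.mul_left _)]
    rw [Finset.sum_congr rfl hcg, sumA, fh, if_pos he]
    congr 1
    have key : ((m*(m+1) : ℕ) : ℤ) = M*(M+1) := by
      rcases lt_trichotomy M 0 with hM | hM | hM
      · have h1 : (m:ℤ) = -M-1 := by
          simp only [hm, if_neg (by omega : ¬ 0 < M)]
          omega
        push_cast
        rw [h1]
        ring
      · subst hM
        norm_num [hm]
      · have h1 : (m:ℤ) = M := by
          simp only [hm, if_pos hM]
          omega
        push_cast
        rw [h1]
    exact_mod_cast congrArg (fun z : ℤ => (z:ℂ)) key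
  · have hcg : ∀ k ∈ Finset.range m,
        (2*((k:ℂ)+1)) * (if Even (((k:ℤ)+1)*h) then fs N β else fc N β)
          = (2*((k:ℂ)+1)) * (if Even (k+1) then fs N β else fc N β) := by
      intro k _
      congr 1
      by_cases hk : Even (k+1)
      · rw [if_pos hk, if_pos]
        have : Even ((k:ℤ)+1) := by exact_mod_cast hk
        exact this.mul_right h
      · rw [if_neg hk, if_neg]
        rw [Int.even_mul]
        push_neg
        constructor
        · intro hc
          exact hk (by exact_mod_cast hc)
        · exact Int.not_even_iff_odd.mpr ho
    rw [Finset.sum_congr rfl hcg, sumB, fh, if_neg (Int.not_even_iff_odd.mpr ho)]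
    have e1 : ((2*(m/2)*(m/2+1) : ℕ) : ℤ) = 2 * M.fdiv 2 * (M.fdiv 2 + 1) := by
      rw [Int.fdiv_eq_ediv_of_nonneg _ (by norm_num)]
      rcases lt_trichotomy M 0 with hM | hM | hM
      · have h1 : (m:ℤ) = -M-1 := by
          simp only [hm, if_neg (by omega : ¬ 0 < M)]
          omega
        have d1 : ((m:ℤ))/2 = -(M/2)-1 := by omega
        push_cast
        rw [d1]
        ring
      · subst hM
        norm_num [hm]
      · have h1 : (m:ℤ) = M := by
          simp only [hm, if_pos hM]
          omega
        have d1 : ((m:ℤ))/2 = M/2 := by omega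
        push_cast
        rw [d1]
    have e2 : ((2*((m+1)/2)^2 : ℕ) : ℤ) = 2 * ((M+1).fdiv 2)^2 := by
      rw [Int.fdiv_eq_ediv_of_nonneg _ (by norm_num)]
      rcases lt_trichotomy M 0 with hM | hM | hM
      · have h1 : (m:ℤ) = -M-1 := by
          simp only [hm, if_neg (by omega : ¬ 0 < M)]
          omega
        have d2 : ((m:ℤ)+1)/2 = -((M+1)/2) := by omega
        push_cast
        rw [d2]
        ring
      · subst hM
        norm_num [hm]
      · have h1 : (m:ℤ) = M := by
          simp only [hm, if_pos hM]
          omega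
        have d2 : ((m:ℤ)+1)/2 = (M+1)/2 := by omega
        push_cast
        rw [d2]
    rw [show ((2*(m/2)*(m/2+1) : ℕ) : ℂ) = ((2 * M.fdiv 2 * (M.fdiv 2 + 1) : ℤ) : ℂ) from by
        rw [← e1]; exact_mod_cast rfl,
      show ((2*((m+1)/2)^2 : ℕ) : ℂ) = ((2 * ((M+1).fdiv 2)^2 : ℤ) : ℂ) from by
        rw [← e2]; exact_mod_cast rfl]

private lemma Yfun_key (N : ℕ) (hN : 1 ≤ N) (M h : ℤ) (β : ℂ) (hβ : Gen2 N β) :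
    Yfun N (((N:ℂ)*(h:ℂ))/2) M β = 1 ∧
    HasDerivAt (fun ε : ℂ => Yfun N (((N:ℂ)*(h:ℂ) - ε)/2) M β) (fh N M h β) 0 := by
  have hfun : (fun ε : ℂ => Yfun N (((N:ℂ)*(h:ℂ) - ε)/2) M β)
      = (fun ε : ℂ => ∏ k ∈ Finset.range (if 0 < M then M.toNat else M.natAbs - 1),
          factor N h β k ε) := by
    funext ε
    simp only [Yfun, factor]
  constructor
  · have h0 : ((N:ℂ)*(h:ℂ))/2 = ((N:ℂ)*(h:ℂ) - 0)/2 := by ring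
    rw [h0, show Yfun N (((N:ℂ)*(h:ℂ) - 0)/2) M β
        = ∏ k ∈ Finset.range (if 0 < M then M.toNat else M.natAbs - 1), factor N h β k 0
      from congrFun hfun 0]
    exact Finset.prod_eq_one (fun k _ => (factor_key N hN h β hβ k).1)
  · rw [hfun, ← sum_d N M h β]
    exact prod_one_hasDeriv _ _ _ (fun k _ => (factor_key N hN h β hβ k).1)
      (fun k _ => (factor_key N hN h β hβ k).2)

/-- Theorem 4.3 (Section 5) of the paper (analytic content): with `Nh = 2r + ε`, the
function `G(ε) = ∏_{j<s} ∏_{l<s'} 𝒴_{N,(Nh−ε)/2,M}(β + iπ(j − l − (s−s')/2))` satisfies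
`G(0) = 1` and `G′(0) = ∑_{j<s} ∑_{l<s'} f_h(β + iπ(j − l − (s−s')/2))`, giving the
`h`-labelled Poisson structure on the higher-spin generators `w_s(β)`. -/
theorem Yfun_prod_hasDerivAt (N : ℕ) (hN : 1 ≤ N) (M : ℤ) (h : ℤ) (hh : h ≠ 0)
    (s s' : ℕ) (hs : 1 ≤ s) (hs' : 1 ≤ s') (β : ℂ)
    (hβ : ∀ j ∈ Finset.range s, ∀ l ∈ Finset.range s',
      Gen2 N (β + Complex.I * (π : ℂ) * ((j : ℂ) - (l : ℂ) - ((s : ℂ) - (s' : ℂ)) / 2))) :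
    (∏ j ∈ Finset.range s, ∏ l ∈ Finset.range s',
        Yfun N (((N : ℂ) * (h : ℂ)) / 2) M
          (β + Complex.I * (π : ℂ) * ((j : ℂ) - (l : ℂ) - ((s : ℂ) - (s' : ℂ)) / 2))) = 1 ∧
    HasDerivAt
      (fun ε : ℂ => ∏ j ∈ Finset.range s, ∏ l ∈ Finset.range s',
        Yfun N (((N : ℂ) * (h : ℂ) - ε) / 2) M
          (β + Complex.I * (π : ℂ) * ((j : ℂ) - (l : ℂ) - ((s : ℂ) - (s' : ℂ)) / 2)))
      (∑ j ∈ Finset.range s, ∑ l ∈ Finset.range s',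
        fh N M h (β + Complex.I * (π : ℂ) * ((j : ℂ) - (l : ℂ) - ((s : ℂ) - (s' : ℂ)) / 2)))
      0 := by
  have key : ∀ j ∈ Finset.range s, ∀ l ∈ Finset.range s',
      Yfun N (((N:ℂ)*(h:ℂ))/2) M
        (β + Complex.I * (π : ℂ) * ((j : ℂ) - (l : ℂ) - ((s : ℂ) - (s' : ℂ)) / 2)) = 1 ∧
      HasDerivAt (fun ε : ℂ => Yfun N (((N:ℂ)*(h:ℂ) - ε)/2) M
        (β + Complex.I * (π : ℂ) * ((j : ℂ) - (l : ℂ) - ((s : ℂ) - (s' : ℂ)) / 2)))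
        (fh N M h (β + Complex.I * (π : ℂ) * ((j : ℂ) - (l : ℂ) - ((s : ℂ) - (s' : ℂ)) / 2)))
        0 :=
    fun j hj l hl => Yfun_key N hN M h _ (hβ j hj l hl)
  constructor
  · exact Finset.prod_eq_one (fun j hj => Finset.prod_eq_one (fun l hl => (key j hj l hl).1))
  · exact prod_one_hasDeriv (Finset.range s)
      (fun j ε => ∏ l ∈ Finset.range s',
        Yfun N (((N:ℂ)*(h:ℂ) - ε)/2) M
          (β + Complex.I * (π : ℂ) * ((j : ℂ) - (l : ℂ) - ((s : ℂ) - (s' : ℂ)) / 2)))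
      (fun j => ∑ l ∈ Finset.range s',
        fh N M h (β + Complex.I * (π : ℂ) * ((j : ℂ) - (l : ℂ) - ((s : ℂ) - (s' : ℂ)) / 2)))
      (fun j hj => Finset.prod_eq_one (fun l hl => by simpa using (key j hj l hl).1))
      (fun j hj => prod_one_hasDeriv (Finset.range s')
        (fun l ε => Yfun N (((N:ℂ)*(h:ℂ) - ε)/2) M
          (β + Complex.I * (π : ℂ) * ((j : ℂ) - (l : ℂ) - ((s : ℂ) - (s' : ℂ)) / 2)))
        (fun l => fh N M h (β + Complex.I * (π : ℂ) * ((j : ℂ) - (l : ℂ) - ((s : ℂ) - (s' : ℂ)) / 2)))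
        (fun l hl => by simpa using (key j hj l hl).1)
        (fun l hl => (key j hj l hl).2))
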